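/- arXiv:2009.13101 — 5 statements merged into one kernel-verified Lean document; each statement's English description precedes it below -/
import Mathlib

section
/- Let Σ be a finite alphabet and f : Σ* → ℝ a function on strings. Then f can be computed by a weighted automaton (i.e., there exist r ∈ ℕ, vectors α₀, α∞ ∈ ℝ^r and matrices M_σ ∈ ℝ^{r×r} for each σ ∈ Σ such that f(σ₁…σₙ) = α₀ᵀ M_{σ₁} ⋯ M_{σₙ} α∞ for every string, with the empty product being the identity) if and only if the rank of the Hankel matrix of f is finite; moreover, in that case this rank is equal to the minimal dimension r over all such linear representations computing f. -/
open Matrix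

/-- The ordered product `M_w = M_{σ₁} ⋯ M_{σₙ}` for a string `w = σ₁…σₙ`. -/
def wordProd {Γ : Type*} {r : ℕ} (M : Γ → Matrix (Fin r) (Fin r) ℝ) (w : List Γ) :
    Matrix (Fin r) (Fin r) ℝ :=
  (w.map M).prod

/-- The linear representation `(α₀, M, αω)` computes `f`. -/
def Computes {Γ : Type*} {r : ℕ} (α₀ : Fin r → ℝ) (M : Γ → Matrix (Fin r) (Fin r) ℝ)
    (αω : Fin r → ℝ) (f : List Γ → ℝ) : Prop :=
  ∀ w : List Γ, f w = α₀ ⬝ᵥ (wordProd M w).mulVec αω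

/-- The rank of the Hankel matrix of `f`: the dimension of the span of its rows
`v ↦ f (u ++ v)` inside the space of functions `Γ* → ℝ`. -/
noncomputable def hankelRank {Γ : Type*} (f : List Γ → ℝ) : Cardinal :=
  Module.rank ℝ
    ↥(Submodule.span ℝ (Set.range fun u : List Γ => fun v : List Γ => f (u ++ v)))

/-!
A representation `(α₀, M, αω)` writes the row `v ↦ f (u ++ v)` as the combination, with
coefficients `α₀ᵀ M_u`, of the `r` functions `v ↦ (M_v αω) i`, so the Hankel rank is at most `r`.
Conversely, the row space `V` of `H_f` is stable under the shifts `g ↦ (v ↦ g (σ :: v))`, and `f`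
is its row at `λ`. If `V` is finite-dimensional, the transposed matrices of the shifts in a basis
of `V`, the coordinates of `f` and the values at `λ` of the basis vectors form a representation
of dimension `dim V` computing `f`.
-/

open Module LinearMap

section WordProd

variable {Γ : Type*} {r : ℕ} (M : Γ → Matrix (Fin r) (Fin r) ℝ)

@[simp]
lemma wordProd_nil : wordProd M [] = 1 := rfl

@[simp]
lemma wordProd_cons (σ : Γ) (w : List Γ) : wordProd M (σ :: w) = M σ * wordProd M w := by
  simp [wordProd]

lemma wordProd_append (u v : List Γ) : wordProd M (u ++ v) = wordProd M u * wordProd M v := by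
  simp [wordProd]

end WordProd

section Hankel

variable {Γ : Type*}

def hankelRowSpace (f : List Γ → ℝ) : Submodule ℝ (List Γ → ℝ) :=
  Submodule.span ℝ (Set.range fun u v => f (u ++ v))

lemma hankelRank_eq_rank_hankelRowSpace (f : List Γ → ℝ) :
    hankelRank f = Module.rank ℝ (hankelRowSpace f) := rfl

lemma mem_hankelRowSpace_self (f : List Γ → ℝ) : f ∈ hankelRowSpace f :=
  Submodule.subset_span ⟨[], rfl⟩

lemma hankelRowSpace_le_comap_funLeft_cons (f : List Γ → ℝ) (σ : Γ) :
    hankelRowSpace f ≤ (hankelRowSpace f).comap (funLeft ℝ ℝ (List.cons σ)) := by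
  rw [hankelRowSpace, Submodule.span_le]
  rintro _ ⟨u, rfl⟩
  exact Submodule.subset_span ⟨u ++ [σ], by funext v; simp⟩

lemma hankelRowSpace_le_span_of_computes {f : List Γ → ℝ} {r : ℕ} {α₀ αω : Fin r → ℝ}
    {M : Γ → Matrix (Fin r) (Fin r) ℝ} (h : Computes α₀ M αω f) :
    hankelRowSpace f ≤ Submodule.span ℝ (Set.range fun i v => (wordProd M v *ᵥ αω) i) := by
  rw [hankelRowSpace, Submodule.span_le]
  rintro _ ⟨u, rfl⟩
  refine (Submodule.mem_span_range_iff_exists_fun ℝ).2 ⟨α₀ ᵥ* wordProd M u, ?_⟩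
  funext v
  change _ = f (u ++ v)
  rw [h, wordProd_append, ← mulVec_mulVec, dotProduct_mulVec]
  simp [dotProduct]

lemma hankelRank_le_of_computes {f : List Γ → ℝ} {r : ℕ} {α₀ αω : Fin r → ℝ}
    {M : Γ → Matrix (Fin r) (Fin r) ℝ} (h : Computes α₀ M αω f) : hankelRank f ≤ r := by
  set g : Fin r → List Γ → ℝ := fun i v => (wordProd M v *ᵥ αω) i
  calc hankelRank f ≤ Module.rank ℝ (Submodule.span ℝ (Set.range g)) :=
        Submodule.rank_mono (hankelRowSpace_le_span_of_computes h)
    _ ≤ Cardinal.mk (Set.range g) := rank_span_le _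
    _ ≤ r := by simpa using Cardinal.mk_range_le_lift (f := g)

lemma exists_computes_of_le_comap_funLeft_cons (V : Submodule ℝ (List Γ → ℝ))
    [FiniteDimensional ℝ V] (hV : ∀ σ, V ≤ V.comap (funLeft ℝ ℝ (List.cons σ))) :
    ∃ (αω : Fin (finrank ℝ V) → ℝ) (M : Γ → Matrix (Fin (finrank ℝ V)) (Fin (finrank ℝ V)) ℝ),
      ∀ s : V, Computes ((finBasis ℝ V).repr s) M αω s := by
  set b := finBasis ℝ V
  let T (σ : Γ) : V →ₗ[ℝ] V := (funLeft ℝ ℝ (List.cons σ)).restrict (hV σ)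
  refine ⟨fun i => (b i : List Γ → ℝ) [], fun σ => (toMatrix b b (T σ))ᵀ, fun s w => ?_⟩
  induction w generalizing s with
  | nil =>
    calc (s : List Γ → ℝ) [] = ((∑ i, b.repr s i • b i : V) : List Γ → ℝ) [] := by
          rw [b.sum_repr]
      _ = _ := by
          simp only [Submodule.coe_sum, Submodule.coe_smul, Finset.sum_apply, Pi.smul_apply,
            smul_eq_mul, wordProd_nil, one_mulVec, dotProduct]
  | cons σ w ih =>
    calc (s : List Γ → ℝ) (σ :: w) = (T σ s : List Γ → ℝ) w := rfl
      _ = _ := ih (T σ s)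
      _ = _ := by
        rw [wordProd_cons, ← mulVec_mulVec, dotProduct_mulVec (b.repr s), vecMul_transpose,
          toMatrix_mulVec_repr]

lemma exists_computes_finrank_hankelRowSpace (f : List Γ → ℝ)
    [FiniteDimensional ℝ (hankelRowSpace f)] :
    ∃ (α₀ αω : Fin (finrank ℝ (hankelRowSpace f)) → ℝ)
      (M : Γ → Matrix (Fin (finrank ℝ (hankelRowSpace f)))
        (Fin (finrank ℝ (hankelRowSpace f))) ℝ),
      Computes α₀ M αω f :=
  have ⟨αω, M, h⟩ := exists_computes_of_le_comap_funLeft_cons (hankelRowSpace f)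
    (hankelRowSpace_le_comap_funLeft_cons f)
  ⟨_, αω, M, h ⟨f, mem_hankelRowSpace_self f⟩⟩

end Hankel

theorem statement0_general {Γ : Type*} (f : List Γ → ℝ) :
    ((∃ (r : ℕ) (α₀ αω : Fin r → ℝ) (M : Γ → Matrix (Fin r) (Fin r) ℝ),
        Computes α₀ M αω f) ↔ hankelRank f < Cardinal.aleph0) ∧
    (hankelRank f < Cardinal.aleph0 →
      hankelRank f =
        (sInf {r : ℕ | ∃ (α₀ αω : Fin r → ℝ) (M : Γ → Matrix (Fin r) (Fin r) ℝ),
          Computes α₀ M αω f} : ℕ)) := by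
  refine ⟨⟨fun ⟨_, _, _, _, h⟩ => (hankelRank_le_of_computes h).trans_lt Cardinal.natCast_lt_aleph0,
    fun h => ?_⟩, fun h => ?_⟩
  all_goals have : FiniteDimensional ℝ (hankelRowSpace f) := Module.rank_lt_aleph0_iff.mp h
  · exact ⟨_, exists_computes_finrank_hankelRowSpace f⟩
  · have minimal : IsLeast {r : ℕ | ∃ (α₀ αω : Fin r → ℝ) (M : Γ → Matrix (Fin r) (Fin r) ℝ),
        Computes α₀ M αω f} (finrank ℝ (hankelRowSpace f)) :=
      ⟨exists_computes_finrank_hankelRowSpace f,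
        fun _ ⟨_, _, _, hr⟩ => finrank_le_of_rank_le (hankelRank_le_of_computes hr)⟩
    rw [minimal.csInf_eq, finrank_eq_rank, hankelRank_eq_rank_hankelRowSpace]

theorem statement0 {Γ : Type*} [Fintype Γ] (f : List Γ → ℝ) :
    ((∃ (r : ℕ) (α₀ αω : Fin r → ℝ) (M : Γ → Matrix (Fin r) (Fin r) ℝ),
        Computes α₀ M αω f) ↔ hankelRank f < Cardinal.aleph0) ∧
    (hankelRank f < Cardinal.aleph0 →
      hankelRank f =
        (sInf {r : ℕ | ∃ (α₀ αω : Fin r → ℝ) (M : Γ → Matrix (Fin r) (Fin r) ℝ),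
          Computes α₀ M αω f} : ℕ)) :=
  statement0_general f
end

section
/- Let Σ be a finite alphabet and suppose f : Σ* → ℝ is computed by a linear representation (α₀, (M_σ)_{σ∈Σ}, α∞) of dimension r, i.e., f(w) = α₀ᵀ M_w α∞ for all strings w. Then the rank of the Hankel matrix of f is at most r; equivalently, every linear representation computing f has dimension at least the rank of the Hankel matrix of f. -/
open Matrix

theorem statement1 {Γ : Type*} [Fintype Γ] (f : List Γ → ℝ) (r : ℕ)
    (α₀ αω : Fin r → ℝ) (M : Γ → Matrix (Fin r) (Fin r) ℝ)
    (hf : ∀ w : List Γ, f w = α₀ ⬝ᵥ (wordProd M w).mulVec αω) :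
    hankelRank f ≤ r := by
  -- linear map sending x ∈ ℝ^r to the function v ↦ x ⬝ (M_v α∞)
  let φ : (Fin r → ℝ) →ₗ[ℝ] (List Γ → ℝ) :=
    { toFun := fun x => fun v => x ⬝ᵥ (wordProd M v).mulVec αω
      map_add' := by intro x y; funext v; simp [add_dotProduct]
      map_smul' := by intro c x; funext v; simp [smul_dotProduct] }
  have hmul : ∀ u v : List Γ, wordProd M (u ++ v) = wordProd M u * wordProd M v := by
    intro u v; simp [wordProd]
  have hsub : Submodule.span ℝ
      (Set.range fun u : List Γ => fun v : List Γ => f (u ++ v)) ≤ LinearMap.range φ := by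
    rw [Submodule.span_le]
    rintro _ ⟨u, rfl⟩
    refine ⟨(wordProd M u).vecMul α₀, ?_⟩
    funext v
    simp only [φ, LinearMap.coe_mk, AddHom.coe_mk]
    rw [hf (u ++ v), hmul]
    simp [Matrix.dotProduct_mulVec, Matrix.vecMul_vecMul]
  refine (Submodule.rank_mono hsub).trans ?_
  have h := lift_rank_range_le φ
  simpa using h
end

section
/- Let Σ be a finite alphabet and f : Σ* → ℝ. If the rank of the Hankel matrix of f is a finite number r, then there exists a linear representation (α₀, (M_σ)_{σ∈Σ}, α∞) of dimension exactly r computing f, i.e., f(w) = α₀ᵀ M_w α∞ for all strings w. -/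
open Matrix

/-!
The rows `H_u : v ↦ f (u v)` of the Hankel matrix span a space `V` of dimension `r`, and the
left shift `g ↦ (v ↦ g (σ v))` maps `H_u` to `H_{uσ}`, so it restricts to an endomorphism `T_σ`
of `V`. Reading a word `w` letter by letter from `H_λ` reaches `H_w`, and evaluating at `λ`
gives `f w`. Writing all of this in a basis of `V` yields the representation: `α₀` holds the
coordinates of `H_λ`, `M_σ` is the transposed matrix of `T_σ`, and `α∞` lists the values of the
basis vectors at `λ`.
-/

section LinearRepresentation

variable {Γ V : Type*} [AddCommGroup V] [Module ℝ V]

theorem Module.Basis.vecMul_wordProd_transpose_toMatrix {r : ℕ} (b : Module.Basis (Fin r) ℝ V)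
    (T : Γ → V →ₗ[ℝ] V) (x : V) (w : List Γ) :
    vecMul (b.repr x) (wordProd (fun σ => (LinearMap.toMatrix b b (T σ))ᵀ) w) =
      b.repr (w.foldl (fun y σ => T σ y) x) := by
  induction w using List.reverseRecOn with
  | nil => simp [wordProd]
  | append_singleton w σ ih =>
    rw [wordProd, List.map_append, List.prod_append, ← vecMul_vecMul, ← wordProd, ih,
      List.foldl_append, List.map_singleton, List.prod_singleton, vecMul_transpose,
      LinearMap.toMatrix_mulVec_repr, List.foldl_cons, List.foldl_nil]

theorem Module.Basis.repr_dotProduct_apply {r : ℕ} (b : Module.Basis (Fin r) ℝ V)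
    (φ : V →ₗ[ℝ] ℝ) (x : V) : ⇑(b.repr x) ⬝ᵥ (fun i => φ (b i)) = φ x := by
  conv_rhs => rw [← b.sum_repr x]
  simp only [dotProduct, map_sum, map_smul, smul_eq_mul]

theorem exists_linearRepresentation_of_finrank_eq [Module.Finite ℝ V] {r : ℕ}
    (hr : Module.finrank ℝ V = r) (T : Γ → V →ₗ[ℝ] V) (x₀ : V) (φ : V →ₗ[ℝ] ℝ) :
    ∃ (α₀ αω : Fin r → ℝ) (M : Γ → Matrix (Fin r) (Fin r) ℝ),
      ∀ w : List Γ, φ (w.foldl (fun x σ => T σ x) x₀) = α₀ ⬝ᵥ (wordProd M w) *ᵥ αω := by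
  let b := Module.finBasisOfFinrankEq ℝ V hr
  refine ⟨b.repr x₀, fun i => φ (b i), fun σ => (LinearMap.toMatrix b b (T σ))ᵀ, fun w => ?_⟩
  rw [dotProduct_mulVec, b.vecMul_wordProd_transpose_toMatrix, b.repr_dotProduct_apply]

end LinearRepresentation

section Hankel

variable {Γ : Type*} (f : List Γ → ℝ)

def hankelRow (u : List Γ) : List Γ → ℝ := fun v => f (u ++ v)

def hankelSpan : Submodule ℝ (List Γ → ℝ) := Submodule.span ℝ (Set.range (hankelRow f))

theorem hankelRank_eq_rank_hankelSpan : hankelRank f = Module.rank ℝ (hankelSpan f) := rfl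

theorem hankelRow_mem_hankelSpan (u : List Γ) : hankelRow f u ∈ hankelSpan f :=
  Submodule.subset_span ⟨u, rfl⟩

theorem funLeft_cons_hankelRow (σ : Γ) (u : List Γ) :
    LinearMap.funLeft ℝ ℝ (List.cons σ) (hankelRow f u) = hankelRow f (u ++ [σ]) := by
  funext v
  simp [hankelRow, LinearMap.funLeft_apply]

theorem hankelSpan_map_funLeft_cons_le (σ : Γ) :
    (hankelSpan f).map (LinearMap.funLeft ℝ ℝ (List.cons σ)) ≤ hankelSpan f := by
  rw [hankelSpan, Submodule.map_span, Submodule.span_le]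
  rintro _ ⟨_, ⟨u, rfl⟩, rfl⟩
  rw [funLeft_cons_hankelRow]
  exact hankelRow_mem_hankelSpan f _

def hankelShift (σ : Γ) : hankelSpan f →ₗ[ℝ] hankelSpan f :=
  (LinearMap.funLeft ℝ ℝ (List.cons σ)).restrict fun _ hg =>
    hankelSpan_map_funLeft_cons_le f σ (Submodule.mem_map_of_mem hg)

theorem hankelShift_hankelRow (σ : Γ) (u : List Γ) :
    hankelShift f σ ⟨hankelRow f u, hankelRow_mem_hankelSpan f u⟩ =
      ⟨hankelRow f (u ++ [σ]), hankelRow_mem_hankelSpan f _⟩ :=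
  Subtype.ext (funLeft_cons_hankelRow f σ u)

theorem foldl_hankelShift (u w : List Γ) :
    w.foldl (fun x σ => hankelShift f σ x) ⟨hankelRow f u, hankelRow_mem_hankelSpan f u⟩ =
      ⟨hankelRow f (u ++ w), hankelRow_mem_hankelSpan f _⟩ := by
  induction w generalizing u with
  | nil => simp
  | cons σ w ih =>
    rw [List.foldl_cons, hankelShift_hankelRow, ih, List.append_assoc, List.singleton_append]

end Hankel

theorem statement2_general {Γ : Type*} (f : List Γ → ℝ) (r : ℕ)
    (hrank : hankelRank f = r) :
    ∃ (α₀ αω : Fin r → ℝ) (M : Γ → Matrix (Fin r) (Fin r) ℝ),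
      ∀ w : List Γ, f w = α₀ ⬝ᵥ (wordProd M w).mulVec αω := by
  rw [hankelRank_eq_rank_hankelSpan] at hrank
  have : Module.Finite ℝ (hankelSpan f) := Module.finite_of_rank_eq_nat hrank
  obtain ⟨α₀, αω, M, hM⟩ := exists_linearRepresentation_of_finrank_eq
    (Module.finrank_eq_of_rank_eq hrank) (hankelShift f)
    ⟨hankelRow f [], hankelRow_mem_hankelSpan f []⟩ (LinearMap.proj [] ∘ₗ (hankelSpan f).subtype)
  refine ⟨α₀, αω, M, fun w => ?_⟩
  rw [← hM, foldl_hankelShift]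
  simp [hankelRow]

theorem statement2 {Γ : Type*} [Fintype Γ] (f : List Γ → ℝ) (r : ℕ)
    (hrank : hankelRank f = r) :
    ∃ (α₀ αω : Fin r → ℝ) (M : Γ → Matrix (Fin r) (Fin r) ℝ),
      ∀ w : List Γ, f w = α₀ ⬝ᵥ (wordProd M w).mulVec αω :=
  statement2_general f r hrank
end

section
/- Let Σ be a finite alphabet and let (α₀, (M_σ)_{σ∈Σ}, α∞) be a linear representation of dimension r computing f : Σ* → ℝ. Let M̄ = ∑_{σ∈Σ} M_σ and suppose the family (M_w)_{w∈Σ*} of ordered products indexed by all strings is summable in ℝ^{r×r} with sum N (HasSum). Then (I − M̄) · N = I, and the total weight assigned by the representation is summable with ∑'_{w∈Σ*} f(w) = α₀ᵀ N α∞ (as a HasSum statement for the family (f(w))_{w∈Σ*}). -/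
open Matrix

theorem statement7 {Γ : Type*} [Fintype Γ] {r : ℕ} (f : List Γ → ℝ)
    (α₀ αω : Fin r → ℝ) (M : Γ → Matrix (Fin r) (Fin r) ℝ)
    (hf : ∀ w : List Γ, f w = α₀ ⬝ᵥ (wordProd M w).mulVec αω)
    (N : Matrix (Fin r) (Fin r) ℝ)
    (hN : HasSum (fun w : List Γ => wordProd M w) N) :
    (1 - ∑ σ : Γ, M σ) * N = 1 ∧
      HasSum (fun w : List Γ => f w) (α₀ ⬝ᵥ N.mulVec αω) := by
  classical
  -- Part 1
  have hcons : Function.Injective (fun p : Γ × List Γ => p.1 :: p.2) := by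
    intro p q h
    simp only [List.cons.injEq] at h
    exact Prod.ext h.1 h.2
  have hone : HasSum (fun w : List Γ => if w = ([] : List Γ) then (1 : Matrix (Fin r) (Fin r) ℝ) else 0) 1 :=
    hasSum_ite_eq ([] : List Γ) 1
  have hsub : HasSum (fun w : List Γ =>
      wordProd M w - if w = ([] : List Γ) then (1 : Matrix (Fin r) (Fin r) ℝ) else 0) (N - 1) :=
    hN.sub hone
  have hvanish : ∀ w ∉ Set.range (fun p : Γ × List Γ => p.1 :: p.2),
      (wordProd M w - if w = ([] : List Γ) then (1 : Matrix (Fin r) (Fin r) ℝ) else 0) = 0 := by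
    intro w hw
    cases w with
    | nil => simp [wordProd]
    | cons a t => exact absurd ⟨(a, t), rfl⟩ hw
  have hcomp : HasSum (fun p : Γ × List Γ =>
      wordProd M (p.1 :: p.2) - if (p.1 :: p.2) = ([] : List Γ) then (1 : Matrix (Fin r) (Fin r) ℝ) else 0)
      (N - 1) := (hcons.hasSum_iff hvanish).2 hsub
  have hcomp' : HasSum (fun p : Γ × List Γ => M p.1 * wordProd M p.2) (N - 1) := by
    refine hcomp.congr_fun fun p => ?_
    simp [wordProd]
  have hfiber : ∀ σ : Γ, HasSum (fun w : List Γ => M σ * wordProd M w) (M σ * N) :=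
    fun σ => hN.mul_left (M σ)
  have hΓ : HasSum (fun σ : Γ => M σ * N) (N - 1) :=
    hcomp'.prod_fiberwise hfiber
  have hΓ' : HasSum (fun σ : Γ => M σ * N) (∑ σ : Γ, M σ * N) := hasSum_fintype _
  have hkey : (∑ σ : Γ, M σ * N) = N - 1 := hΓ'.unique hΓ
  have part1 : (1 - ∑ σ : Γ, M σ) * N = 1 := by
    rw [sub_mul, one_mul, Finset.sum_mul, hkey]
    abel
  refine ⟨part1, ?_⟩
  -- Part 2
  let L : Matrix (Fin r) (Fin r) ℝ →ₗ[ℝ] ℝ :=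
    { toFun := fun A => α₀ ⬝ᵥ A.mulVec αω
      map_add' := fun A B => by
        simp [Matrix.add_mulVec, dotProduct_add]
      map_smul' := fun c A => by
        simp [Matrix.smul_mulVec, dotProduct_smul] }
  have hL : Continuous L := L.continuous_of_finiteDimensional
  have := hN.map L hL
  refine this.congr_fun fun w => ?_
  simp only [Function.comp_apply, hf w]
  rfl
end

section
/- Let Σ be a finite alphabet and f : Σ* → ℝ a function whose Hankel matrix has finite rank r. Then there exists a finite complete and prefix-closed basis: finite sets of strings 𝒫 and 𝒮 with λ ∈ 𝒫, λ ∈ 𝒮, 𝒫 prefix-closed, and such that the finite sub-block H_B ∈ ℝ^{𝒫×𝒮} with entries H_B(u,v) = f(uv) has matrix rank equal to r. -/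
open Matrix

open Submodule Module

/-- In a finite-dimensional space, a separating family of functionals has a finite
separating subfamily. -/
lemma exists_finset_separating {W : Type*} [AddCommGroup W] [Module ℝ W]
    [FiniteDimensional ℝ W] {ι : Type*} (φ : ι → W →ₗ[ℝ] ℝ)
    (h : ∀ x : W, (∀ i, φ i x = 0) → x = 0) :
    ∃ s : Finset ι, ∀ x : W, (∀ i ∈ s, φ i x = 0) → x = 0 := by
  classical
  set K : Finset ι → Submodule ℝ W := fun s => ⨅ i ∈ s, LinearMap.ker (φ i) with hK
  have hmem : ∀ s x, x ∈ K s ↔ ∀ i ∈ s, φ i x = 0 := by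
    intro s x; simp [hK, LinearMap.mem_ker]
  set N : Set ℕ := Set.range fun s => Module.finrank ℝ (K s) with hN
  have hNne : N.Nonempty := ⟨_, ⟨∅, rfl⟩⟩
  obtain ⟨s, hs⟩ : ∃ s, Module.finrank ℝ (K s) = sInf N := Nat.sInf_mem hNne
  refine ⟨s, fun x hx => ?_⟩
  by_contra hx0
  have hxK : x ∈ K s := (hmem s x).2 hx
  obtain ⟨i, hi⟩ : ∃ i, φ i x ≠ 0 := by
    by_contra h'
    push_neg at h'
    exact hx0 (h x h')
  have hle : K (insert i s) ≤ K s := by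
    intro y hy
    exact (hmem s y).2 fun j hj => (hmem _ y).1 hy j (Finset.mem_insert_of_mem hj)
  have hlt : K (insert i s) < K s := by
    refine lt_of_le_of_ne hle fun he => hi ?_
    have : x ∈ K (insert i s) := he ▸ hxK
    exact (hmem _ x).1 this i (Finset.mem_insert_self i s)
  have h1 : Module.finrank ℝ (K (insert i s)) < Module.finrank ℝ (K s) :=
    Submodule.finrank_lt_finrank_of_lt hlt
  have h2 : sInf N ≤ Module.finrank ℝ (K (insert i s)) := Nat.sInf_le ⟨insert i s, rfl⟩
  omega

theorem statement10 {Γ : Type*} [Fintype Γ] (f : List Γ → ℝ)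
    (r : ℕ) (hr : hankelRank f = r) :
    ∃ Pb Sb : Finset (List Γ),
      [] ∈ Pb ∧ [] ∈ Sb ∧
      (∀ w ∈ Pb, ∀ u : List Γ, u <+: w → u ∈ Pb) ∧
      (Matrix.of fun (u : ↥Pb) (v : ↥Sb) => f (u.1 ++ v.1)).rank = r := by
  classical
  set row : List Γ → (List Γ → ℝ) := fun u v => f (u ++ v) with hrow
  set V : Submodule ℝ (List Γ → ℝ) := Submodule.span ℝ (Set.range row) with hVdef
  have hrank : Module.rank ℝ V = r := hr
  have hfin : Module.Finite ℝ V := Module.finite_of_rank_eq_nat hrank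
  have hfr : Module.finrank ℝ V = r := finrank_eq_of_rank_eq hrank
  -- a linearly independent spanning subset of the rows
  obtain ⟨b, hbsub, hbspan, hbind⟩ := exists_linearIndependent ℝ (Set.range row)
  have hbV : Submodule.span ℝ b = V := by rw [hbspan, hVdef]
  have hfinb : Module.Finite ℝ (Submodule.span ℝ (Set.range ((↑) : b → (List Γ → ℝ)))) := by
    rw [Subtype.range_coe, hbV]; exact hfin
  haveI : Fintype b := by
    have : IsNoetherian ℝ (Submodule.span ℝ (Set.range ((↑) : b → (List Γ → ℝ)))) :=
      IsNoetherian.iff_fg.mpr hfinb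
    exact IsNoetherian.fintypeBasisIndex (Basis.span hbind)
  have hcard : Fintype.card b = r := by
    have := finrank_span_eq_card hbind
    rw [Subtype.range_coe, hbV, hfr] at this
    exact this.symm
  -- choose preimages under `row`
  have hpre : ∀ x : b, ∃ u : List Γ, row u = (x : List Γ → ℝ) := fun x => hbsub x.2
  choose g hg using hpre
  set U : Finset (List Γ) := Finset.univ.image g with hU
  set Pb : Finset (List Γ) := (insert [] U).biUnion (fun w => w.inits.toFinset) with hPb
  have hPbmem : ∀ w, w ∈ Pb ↔ ∃ w' ∈ insert [] U, w <+: w' := by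
    intro w
    simp [hPb, List.mem_inits]
  have hnilP : [] ∈ Pb := (hPbmem []).2 ⟨[], Finset.mem_insert_self _ _, List.nil_prefix⟩
  have hUPb : ∀ u ∈ U, u ∈ Pb := fun u hu =>
    (hPbmem u).2 ⟨u, Finset.mem_insert_of_mem hu, List.prefix_refl u⟩
  have hclosed : ∀ w ∈ Pb, ∀ u : List Γ, u <+: w → u ∈ Pb := by
    intro w hw u hu
    obtain ⟨w', hw', hww'⟩ := (hPbmem w).1 hw
    exact (hPbmem u).2 ⟨w', hw', hu.trans hww'⟩
  -- choose separating columns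
  set φ : List Γ → (V →ₗ[ℝ] ℝ) := fun v => (LinearMap.proj v).comp V.subtype with hφ
  have hsep : ∀ x : V, (∀ v, φ v x = 0) → x = 0 := by
    intro x hx
    exact Subtype.ext (funext fun v => hx v)
  obtain ⟨s, hs⟩ := exists_finset_separating φ hsep
  set Sb : Finset (List Γ) := insert [] s with hSb
  have hnilS : [] ∈ Sb := Finset.mem_insert_self _ _
  -- restriction map to the columns
  set R : (List Γ → ℝ) →ₗ[ℝ] (↥Sb → ℝ) := LinearMap.funLeft ℝ ℝ ((↑) : ↥Sb → List Γ) with hR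
  have hdisj : Disjoint V (LinearMap.ker R) := by
    rw [disjoint_iff_inf_le]
    intro x hx
    have hxV : x ∈ V := hx.1
    have hxk : R x = 0 := hx.2
    have hz : ∀ v ∈ s, φ v ⟨x, hxV⟩ = 0 := by
      intro v hv
      have hvv : φ v ⟨x, hxV⟩ = R x ⟨v, Finset.mem_insert_of_mem hv⟩ := rfl
      rw [hvv, hxk]; rfl
    have := hs ⟨x, hxV⟩ hz
    simpa using congrArg Subtype.val this
  set M : Matrix ↥Pb ↥Sb ℝ := Matrix.of fun (u : ↥Pb) (v : ↥Sb) => f (u.1 ++ v.1) with hM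
  have hMrow : ∀ u : ↥Pb, M u = R (row u.1) := fun u => rfl
  refine ⟨Pb, Sb, hnilP, hnilS, hclosed, ?_⟩
  rw [Matrix.rank_eq_finrank_span_row]
  -- lower bound: the restricted independent family sits inside the row span
  have hindR : LinearIndependent ℝ (fun x : b => R (x : List Γ → ℝ)) := by
    have := hbind.map (f := R) (by rw [Subtype.range_coe, hbV]; exact hdisj)
    exact this
  have hlow : Submodule.span ℝ (Set.range fun x : b => R (x : List Γ → ℝ)) ≤
      Submodule.span ℝ (Set.range M) := by
    apply Submodule.span_mono
    rintro _ ⟨x, rfl⟩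
    have hgx : g x ∈ Pb := hUPb _ (Finset.mem_image_of_mem g (Finset.mem_univ x))
    exact ⟨⟨g x, hgx⟩, by rw [hMrow]; rw [hg x]⟩
  have hlowrank : r ≤ Module.finrank ℝ (Submodule.span ℝ (Set.range M)) := by
    have h1 := finrank_span_eq_card hindR
    rw [hcard] at h1
    calc r = Module.finrank ℝ (Submodule.span ℝ (Set.range fun x : b => R (x : List Γ → ℝ))) :=
            h1.symm
      _ ≤ _ := Submodule.finrank_mono hlow
  -- upper bound: rows lie in the image of V
  have hup : Submodule.span ℝ (Set.range M) ≤ Submodule.map R V := by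
    rw [Submodule.span_le]
    rintro _ ⟨u, rfl⟩
    exact ⟨row u.1, Submodule.subset_span ⟨u.1, rfl⟩, (hMrow u).symm⟩
  have huprank : Module.finrank ℝ (Submodule.span ℝ (Set.range M)) ≤ r := by
    calc Module.finrank ℝ (Submodule.span ℝ (Set.range M))
        ≤ Module.finrank ℝ (Submodule.map R V) := Submodule.finrank_mono hup
      _ ≤ Module.finrank ℝ V := Submodule.finrank_map_le R V
      _ = r := hfr
  exact le_antisymm huprank hlowrank
end
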